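/- For all non-negative integers n and r, the Bernoulli polynomial B_n evaluated at r equals the sum over k from 0 to n of (-1)^k * k!/(k+1) * S_r(n+r, k+r), where S_r denotes the r-Stirling numbers of the second kind. -/

import Mathlib

open Finset Real

/-- Stirling numbers of the second kind `S(n, k)`. -/
def stirling2 : ℕ → ℕ → ℕ
  | 0, 0 => 1
  | 0, _ + 1 => 0
  | _ + 1, 0 => 0
  | n + 1, k + 1 => (k + 1) * stirling2 n (k + 1) + stirling2 n k

/-- The `r`-Stirling numbers of the second kind `S_r(n, k)` of Broder: the number of
partitions of `{1, …, n}` into `k` non-empty subsets such that `1, …, r` lie in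
distinct subsets (with the convention `S_r(n, k) = 0` for `n < r`). -/
def rStirling (r : ℕ) : ℕ → ℕ → ℕ
  | 0, k => if r = 0 ∧ k = 0 then 1 else 0
  | n + 1, k =>
    if n + 1 < r then 0
    else if n + 1 = r then (if k = r then 1 else 0)
    else
      match k with
      | 0 => 0
      | k + 1 => (k + 1) * rStirling r n (k + 1) + rStirling r n k

/-! With `Δ` the forward difference of step `1`, the identity
`Δ^[k+1] (x * g) = (x + k + 1) * Δ^[k+1] g + (k + 1) * Δ^[k] g` mirrors the recurrence of the
`r`-Stirling numbers, so that `k! * S_r(n + r, k + r) = Δ^[k] (x ^ n)` at `x = r`. The theorem thus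
becomes the classical expansion `B_n(x) = ∑ₖ (-1)^k / (k + 1) * Δ^[k] (x ^ n)`, which is
`log (1 + Δ) = d/dx` in disguise: the truncated series `∑ₖ (-1)^k / (k + 1) * Δ^[k+1]` obeys
the Leibniz rule on polynomials of small degree, hence differentiates `x ^ n`. Applied to
`∑ᵢ C(n+1, i) x^i = Δ (x ^ (n + 1))`, this shows that the right-hand side satisfies the
recurrence `∑ᵢ C(n+1, i) B_i(x) = (n + 1) x^n`, which determines the Bernoulli polynomials. -/

open fwdDiff

section FwdDiff

variable {R : Type*} [CommRing R]

theorem fwdDiff_iter_succ_mul_id (g : R → R) (m : ℕ) (x : R) :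
    Δ_[1] ^[m + 1] (fun y ↦ y * g y) x =
      (x + (m + 1)) * Δ_[1] ^[m + 1] g x + (m + 1) * Δ_[1] ^[m] g x := by
  induction m generalizing x with
  | zero => simp only [Function.iterate_succ_apply', Function.iterate_zero_apply, fwdDiff]; ring
  | succ m ih =>
    rw [Function.iterate_succ_apply' _ (m + 1), funext ih]
    simp only [Function.iterate_succ_apply', fwdDiff]
    push_cast
    ring

theorem fwdDiff_iter_succ_pow_succ (k n : ℕ) (x : R) :
    Δ_[1] ^[k + 1] (· ^ (n + 1)) x =
      ∑ i ∈ range (n + 1), ((n + 1).choose i : R) * Δ_[1] ^[k] (· ^ i) x := by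
  have hΔ : (Δ_[1] fun y : R ↦ y ^ (n + 1)) =
      ∑ i ∈ range (n + 1), (n + 1).choose i • fun y ↦ y ^ i := by
    ext y
    simp [nsmul_eq_mul, fwdDiff, add_pow, sum_range_succ, mul_comm]
  rw [Function.iterate_succ_apply, hΔ, fwdDiff_iter_finsetSum, Finset.sum_apply]
  refine sum_congr rfl fun i _ ↦ ?_
  rw [fwdDiff_iter_const_smul, Pi.smul_apply, nsmul_eq_mul]

theorem sum_range_fwdDiff_iter_pow_of_le (c : ℕ → R) {i n : ℕ} (hi : i ≤ n) (x : R) :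
    ∑ k ∈ range (i + 1), c k * Δ_[1] ^[k] (· ^ i) x =
      ∑ k ∈ range (n + 1), c k * Δ_[1] ^[k] (· ^ i) x := by
  refine sum_subset (range_subset_range.2 (by omega)) fun k _ hk ↦ ?_
  rw [fwdDiff_iter_pow_eq_zero_of_lt (by simpa using hk), Pi.zero_apply, mul_zero]

end FwdDiff

section FwdDiffLog

variable {K : Type*} [Field K]

-- The truncation of `log (1 + Δ) = ∑_{m ≥ 1} (-1)^(m-1) Δ^m / m`.
def fwdDiffLog (N : ℕ) (g : K → K) (x : K) : K :=
  ∑ k ∈ range (N + 1), (-1) ^ k / (k + 1) * Δ_[1] ^[k + 1] g x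

theorem fwdDiffLog_mul_id [CharZero K] (N : ℕ) (g : K → K) (x : K) :
    fwdDiffLog N (fun y ↦ y * g y) x =
      x * fwdDiffLog N g x + g x + (-1) ^ N * Δ_[1] ^[N + 1] g x := by
  have hterm (k : ℕ) : (-1) ^ k / (k + 1) * Δ_[1] ^[k + 1] (fun y ↦ y * g y) x =
      x * ((-1) ^ k / (k + 1) * Δ_[1] ^[k + 1] g x) +
        ((-1) ^ k * Δ_[1] ^[k] g x - (-1) ^ (k + 1) * Δ_[1] ^[k + 1] g x) := by
    rw [fwdDiff_iter_succ_mul_id]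
    field_simp
    ring
  simp only [fwdDiffLog, hterm, sum_add_distrib, ← mul_sum, sum_range_sub']
  simp only [pow_zero, one_mul, Function.iterate_zero_apply, pow_succ]
  ring

theorem fwdDiffLog_pow [CharZero K] {N n : ℕ} (hn : n ≤ N + 1) (x : K) :
    fwdDiffLog N (· ^ n) x = n * x ^ (n - 1) := by
  induction n with
  | zero =>
    refine (sum_eq_zero fun k _ ↦ ?_).trans (by simp)
    rw [fwdDiff_iter_pow_eq_zero_of_lt (Nat.succ_pos k), Pi.zero_apply, mul_zero]
  | succ n ih =>
    have hpow : (fun y : K ↦ y ^ (n + 1)) = fun y ↦ y * y ^ n := funext fun y ↦ pow_succ' y n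
    rw [hpow, fwdDiffLog_mul_id, ih (by omega), fwdDiff_iter_pow_eq_zero_of_lt (by omega),
      Pi.zero_apply, mul_zero, add_zero]
    rcases n with _ | n
    · simp
    · simp only [Nat.add_sub_cancel, Nat.cast_add, Nat.cast_one]
      ring

theorem sum_choose_mul_sum_fwdDiff_iter_pow [CharZero K] (n : ℕ) (x : K) :
    ∑ i ∈ range (n + 1), ((n + 1).choose i : K) *
        ∑ k ∈ range (i + 1), (-1) ^ k / (k + 1) * Δ_[1] ^[k] (· ^ i) x = (n + 1) * x ^ n := by
  calc _ = ∑ k ∈ range (n + 1), (-1) ^ k / (k + 1) *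
        ∑ i ∈ range (n + 1), ((n + 1).choose i : K) * Δ_[1] ^[k] (· ^ i) x := by
        rw [sum_congr rfl fun i hi ↦ by
          rw [sum_range_fwdDiff_iter_pow_of_le _ (mem_range_succ_iff.1 hi)]]
        simp only [mul_sum]
        rw [sum_comm]
        exact sum_congr rfl fun _ _ ↦ sum_congr rfl fun _ _ ↦ by ring
    _ = fwdDiffLog n (· ^ (n + 1)) x := by
        simp only [fwdDiffLog, fwdDiff_iter_succ_pow_succ]
    _ = (n + 1) * x ^ n := by
        rw [fwdDiffLog_pow le_rfl]
        simp

end FwdDiffLog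

theorem bernoulli_eval_eq_sum_fwdDiff_iter_pow (n : ℕ) (x : ℚ) :
    (Polynomial.bernoulli n).eval x =
      ∑ k ∈ range (n + 1), (-1) ^ k / (k + 1) * Δ_[1] ^[k] (· ^ n) x := by
  induction n using Nat.strong_induction_on with
  | _ n ih =>
  have hB := congrArg (Polynomial.eval x) (Polynomial.sum_bernoulli n)
  simp only [sum_range_succ, Polynomial.eval_add, Polynomial.eval_finsetSum, Polynomial.eval_smul,
    smul_eq_mul, Polynomial.eval_monomial, Nat.choose_succ_self_right] at hB
  have hD := sum_choose_mul_sum_fwdDiff_iter_pow n x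
  rw [sum_range_succ, Nat.choose_succ_self_right,
    sum_congr rfl fun i hi ↦ by rw [← ih i (mem_range.1 hi)]] at hD
  have hn : (n + 1 : ℚ) ≠ 0 := by positivity
  apply mul_left_cancel₀ hn
  push_cast at hB hD
  linarith

theorem rStirling_self (r k : ℕ) : rStirling r r k = if k = r then 1 else 0 := by
  cases r <;> simp [rStirling]

theorem rStirling_succ_zero {r n : ℕ} (h : r ≤ n) : rStirling r (n + 1) 0 = 0 := by
  rw [rStirling, if_neg (by omega), if_neg (by omega)]

theorem rStirling_succ_succ {r n : ℕ} (h : r ≤ n) (k : ℕ) :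
    rStirling r (n + 1) (k + 1) = (k + 1) * rStirling r n (k + 1) + rStirling r n k := by
  rw [rStirling, if_neg (by omega), if_neg (by omega)]

theorem rStirling_add_eq_zero_of_lt {r k : ℕ} (n : ℕ) (hk : k < r) :
    rStirling r (n + r) k = 0 := by
  induction n generalizing k with
  | zero => rw [zero_add, rStirling_self, if_neg hk.ne]
  | succ n ih =>
    rw [add_right_comm]
    cases k with
    | zero => exact rStirling_succ_zero (by omega)
    | succ k => rw [rStirling_succ_succ (by omega), ih hk, ih (by omega), mul_zero]

theorem rStirling_add_succ_self (r n : ℕ) :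
    rStirling r (n + 1 + r) r = r * rStirling r (n + r) r := by
  cases r with
  | zero => simpa using rStirling_succ_zero (Nat.zero_le n)
  | succ r =>
    rw [show n + 1 + (r + 1) = n + (r + 1) + 1 by omega, rStirling_succ_succ (by omega),
      rStirling_add_eq_zero_of_lt n r.lt_succ_self, add_zero]

theorem factorial_mul_rStirling_eq_fwdDiff_iter_pow {R : Type*} [CommRing R] (r n k : ℕ) :
    (k.factorial : R) * rStirling r (n + r) (k + r) = Δ_[1] ^[k] (· ^ n) (r : R) := by
  induction n generalizing k with
  | zero =>
    cases k with
    | zero => simp [rStirling_self]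
    | succ k =>
      rw [fwdDiff_iter_pow_eq_zero_of_lt k.succ_pos, zero_add, rStirling_self, if_neg (by omega)]
      simp
  | succ n ih =>
    cases k with
    | zero =>
      have ih₀ := ih 0
      simp only [zero_add, Nat.factorial_zero, Nat.cast_one, one_mul,
        Function.iterate_zero_apply] at ih₀ ⊢
      rw [rStirling_add_succ_self, Nat.cast_mul, ih₀, pow_succ']
    | succ k =>
      have hpow : (fun y : R ↦ y ^ (n + 1)) = fun y ↦ y * y ^ n :=
        funext fun y ↦ pow_succ' y n
      rw [hpow, fwdDiff_iter_succ_mul_id, ← ih, ← ih, add_right_comm n, add_right_comm k,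
        rStirling_succ_succ (by omega), Nat.factorial_succ]
      push_cast
      ring

theorem bernoulliPoly_eval_eq_sum_rStirling (n r : ℕ) :
    (Polynomial.bernoulli n).eval (r : ℚ) =
      ∑ k ∈ Finset.range (n + 1),
        (-1 : ℚ) ^ k * (Nat.factorial k : ℚ) / (k + 1) * rStirling r (n + r) (k + r) := by
  rw [bernoulli_eval_eq_sum_fwdDiff_iter_pow]
  refine sum_congr rfl fun k _ ↦ ?_
  rw [← factorial_mul_rStirling_eq_fwdDiff_iter_pow]
  ring
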